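/- Let B be a finite Blaschke product of order n ≥ 1 and let 𝒮 = B({β ∈ 𝔻 : B′(β) = 0}) be its set of critical values in 𝔻. Set X = {z ∈ 𝔻 : B(z) ∉ 𝒮} and Y = 𝔻 ∖ 𝒮. Then the restriction of B, regarded as a map from X onto Y, is a covering map (an n-sheeted covering). -/

import Mathlib

open Metric

/-- A finite Blaschke product of order `n`: on the unit disc, `B` is given by
`B(z) = e^{iθ} ∏_{k=1}^{n} (z - a_k)/(1 - conj(a_k) z)` with `a_1, …, a_n ∈ 𝔻`. -/
def IsBlaschke (n : ℕ) (B : ℂ → ℂ) : Prop :=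
  ∃ (θ : ℝ) (a : Fin n → ℂ), (∀ k, a k ∈ Metric.ball (0 : ℂ) 1) ∧
    ∀ z ∈ Metric.ball (0 : ℂ) 1,
      B z = Complex.exp (θ * Complex.I) *
        ∏ k, (z - a k) / (1 - (starRingEnd ℂ) (a k) * z)

/-- The set `𝒮 = B({β ∈ 𝔻 : B′(β) = 0})` of critical values of `B` in the disc. -/
def critValues (B : ℂ → ℂ) : Set ℂ :=
  B '' {β ∈ Metric.ball (0 : ℂ) 1 | deriv B β = 0}

/-!
A Blaschke product `B` of order `n ≥ 1` maps `𝔻` into itself and extends continuously to the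
closed disc with `|B| = 1` on the circle, so preimages under `B` of compact subsets of `𝔻` are
compact: `B` is a proper self-map of `𝔻`. Hence it is a closed map, the critical values form a
relatively closed subset of `𝔻`, and `B : X → Y` is still proper. Off the critical points `B` is a
local homeomorphism by the inverse function theorem, and a proper local homeomorphism is a
covering map (its fibres are compact and discrete, hence finite).

For `w ∈ 𝔻`, clearing denominators turns `B(z) = w` into the polynomial equation
`e^{iθ} ∏ (z - a_k) = w ∏ (1 - conj(a_k) z)` of degree exactly `n`, all of whose roots lie in `𝔻`;
at a root, the derivative of this polynomial is a nonzero multiple of `B′(z)`, so the roots are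
simple when `w ∉ 𝒮`, and the fibre has exactly `n` points.
-/

open Set Topology Polynomial ComplexConjugate

theorem IsProperMap.isCoveringMap {E X : Type*} [TopologicalSpace E] [TopologicalSpace X]
    [T2Space E] {f : E → X} (hp : IsProperMap f) (hl : IsLocalHomeomorph f) :
    IsCoveringMap f := by
  rw [isCoveringMap_iff_isCoveringMapOn_univ]
  refine hp.isClosedMap.isCoveringMapOn_of_isLocalHomeomorphOn (fun x _ ↦ ?_)
    (by simpa using hl.isLocalHomeomorphOn)
  exact (hp.isCompact_preimage isCompact_singleton).finite
    (.of_openPartialHomeomorph f subset_rfl fun e _ ↦ (hl e).imp fun _ h ↦ ⟨h.1, h.2.symm⟩)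

namespace Set.MapsTo

variable {α β : Type*} [TopologicalSpace α] [TopologicalSpace β] {f : α → β} {s : Set α} {t : Set β}

theorem isLocalHomeomorph_restrict (h : MapsTo f s t) (hs : IsOpen s) (ht : IsOpen t)
    (hf : IsLocalHomeomorphOn f s) : IsLocalHomeomorph (h.restrict f s t) := by
  refine IsLocalHomeomorph.of_comp ?_ ht.isOpenEmbedding_subtypeVal.isLocalHomeomorph
    (hf.continuousOn.mapsToRestrict h)
  rw [isLocalHomeomorph_iff_isLocalHomeomorphOn_univ]
  exact hf.comp hs.isOpenEmbedding_subtypeVal.isLocalHomeomorph.isLocalHomeomorphOn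
    fun x _ ↦ x.2

theorem isProperMap_restrict [T2Space β] [FirstCountableTopology β] (h : MapsTo f s t)
    (hf : ContinuousOn f s) (hK : ∀ K ⊆ t, IsCompact K → IsCompact {x ∈ s | f x ∈ K}) :
    IsProperMap (h.restrict f s t) := by
  refine isProperMap_iff_isCompact_preimage.2 ⟨hf.mapsToRestrict h, fun K hKc ↦ ?_⟩
  rw [Subtype.isCompact_iff]
  convert hK _ (Subtype.coe_image_subset t K) (hKc.image continuous_subtype_val) using 1
  ext x
  constructor
  · rintro ⟨⟨x, hx⟩, hxK, rfl⟩
    exact ⟨hx, _, hxK, rfl⟩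
  · rintro ⟨hx, y, hyK, hyx⟩
    have hxy : h.restrict f s t ⟨x, hx⟩ = y := Subtype.ext hyx.symm
    exact ⟨⟨x, hx⟩, by rwa [mem_preimage, hxy], rfl⟩

end Set.MapsTo

/-- `critValues B` is `critValuesOn B (ball 0 1)` by definition. -/
def critValuesOn (f : ℂ → ℂ) (U : Set ℂ) : Set ℂ :=
  f '' {β ∈ U | deriv f β = 0}

section ProperHolomorphic

variable {U : Set ℂ} {f : ℂ → ℂ}

theorem isLocalHomeomorphOn_of_deriv_ne_zero (hU : IsOpen U) (hf : DifferentiableOn ℂ f U) :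
    IsLocalHomeomorphOn f {z ∈ U | deriv f z ≠ 0} :=
  .mk f _ fun _ ⟨hzU, hz⟩ ↦
    have hfz := (hf.analyticAt (hU.mem_nhds hzU)).hasStrictDerivAt.hasStrictFDerivAt_equiv hz
    ⟨_, hfz.mem_toOpenPartialHomeomorph_source, fun _ _ ↦ rfl⟩

theorem isOpen_diff_critValuesOn (hU : IsOpen U) (hf : DifferentiableOn ℂ f U)
    (hmaps : MapsTo f U U) (hK : ∀ K ⊆ U, IsCompact K → IsCompact {z ∈ U | f z ∈ K}) :
    IsOpen (U \ critValuesOn f U) := by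
  let C : Set U := {z | deriv f z = 0}
  have hC : IsClosed C :=
    isClosed_singleton.preimage ((hf.deriv hU).continuousOn.domRestrict)
  have hFC : IsClosed (hmaps.restrict f U U '' C) :=
    (hmaps.isProperMap_restrict hf.continuousOn hK).isClosedMap C hC
  convert hU.isOpenMap_subtype_val _ hFC.isOpen_compl using 1
  ext w
  constructor
  · rintro ⟨hw, hwS⟩
    refine ⟨⟨w, hw⟩, ?_, rfl⟩
    rintro ⟨z, hz, hzw⟩
    exact hwS ⟨z, ⟨z.2, hz⟩, congrArg Subtype.val hzw⟩
  · rintro ⟨w, hwC, rfl⟩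
    refine ⟨w.2, ?_⟩
    rintro ⟨z, ⟨hzU, hz⟩, hzw⟩
    exact hwC ⟨⟨z, hzU⟩, hz, Subtype.ext hzw⟩

theorem isCoveringMap_restrict_compl_critValuesOn (hU : IsOpen U) (hf : DifferentiableOn ℂ f U)
    (hmaps : MapsTo f U U) (hK : ∀ K ⊆ U, IsCompact K → IsCompact {z ∈ U | f z ∈ K})
    (h : MapsTo f {z ∈ U | f z ∉ critValuesOn f U} (U \ critValuesOn f U)) :
    IsCoveringMap (h.restrict f {z ∈ U | f z ∉ critValuesOn f U} (U \ critValuesOn f U)) := by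
  have hY := isOpen_diff_critValuesOn hU hf hmaps hK
  have hX : IsOpen {z ∈ U | f z ∉ critValuesOn f U} := by
    convert hf.continuousOn.isOpen_inter_preimage hU hY using 1
    ext z
    exact and_congr_right fun hz ↦ (and_iff_right (hmaps hz)).symm
  refine IsProperMap.isCoveringMap ?_ (h.isLocalHomeomorph_restrict hX hY ?_)
  · refine h.isProperMap_restrict (hf.continuousOn.mono fun z hz ↦ hz.1) fun K hKY hKc ↦ ?_
    convert hK K (hKY.trans sdiff_subset) hKc using 1
    ext z
    exact ⟨fun ⟨⟨hz, _⟩, hzK⟩ ↦ ⟨hz, hzK⟩, fun ⟨hz, hzK⟩ ↦ ⟨⟨hz, (hKY hzK).2⟩, hzK⟩⟩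
  · refine (isLocalHomeomorphOn_of_deriv_ne_zero hU hf).mono fun z ⟨hzU, hz⟩ ↦ ⟨hzU, ?_⟩
    exact fun hz' ↦ hz ⟨z, ⟨hzU, hz'⟩, rfl⟩

end ProperHolomorphic

section BlaschkeFactor

variable {a z : ℂ}

theorem normSq_one_sub_conj_mul_sub_normSq_sub (a z : ℂ) :
    Complex.normSq (1 - conj a * z) - Complex.normSq (z - a) =
      (1 - Complex.normSq a) * (1 - Complex.normSq z) := by
  simp only [Complex.normSq_apply, Complex.sub_re, Complex.sub_im, Complex.mul_re,
    Complex.mul_im, Complex.one_re, Complex.one_im, Complex.conj_re, Complex.conj_im]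
  ring

theorem norm_sub_lt_norm_one_sub_conj_mul_iff (ha : ‖a‖ < 1) :
    ‖z - a‖ < ‖1 - conj a * z‖ ↔ ‖z‖ < 1 := by
  have h := normSq_one_sub_conj_mul_sub_normSq_sub a z
  simp only [Complex.normSq_eq_norm_sq] at h
  have ha' : 0 < 1 - ‖a‖ ^ 2 := by nlinarith [norm_nonneg a]
  rw [← sq_lt_sq₀ (norm_nonneg _) (norm_nonneg _), ← sq_lt_one_iff₀ (norm_nonneg z)]
  constructor <;> intro <;> nlinarith

theorem norm_sub_eq_norm_one_sub_conj_mul (hz : ‖z‖ = 1) : ‖z - a‖ = ‖1 - conj a * z‖ := by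
  have h := normSq_one_sub_conj_mul_sub_normSq_sub a z
  simp only [Complex.normSq_eq_norm_sq, hz] at h
  rw [← sq_eq_sq₀ (norm_nonneg _) (norm_nonneg _)]
  linarith

theorem one_sub_conj_mul_ne_zero (ha : ‖a‖ < 1) (hz : ‖z‖ ≤ 1) : 1 - conj a * z ≠ 0 := by
  have hlt : ‖conj a * z‖ < 1 := by
    rw [norm_mul, Complex.norm_conj]
    nlinarith [norm_nonneg a, norm_nonneg z]
  rw [sub_ne_zero]
  intro h
  rw [← h, norm_one] at hlt
  exact hlt.false

end BlaschkeFactor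

noncomputable def blaschkeProduct {ι : Type*} [Fintype ι] (θ : ℝ) (a : ι → ℂ) (z : ℂ) : ℂ :=
  Complex.exp (θ * Complex.I) * ∏ k, (z - a k) / (1 - conj (a k) * z)

section BlaschkeProduct

variable {ι : Type*} [Fintype ι] {θ : ℝ} {a : ι → ℂ} {z : ℂ}

theorem norm_blaschkeProduct (θ : ℝ) (a : ι → ℂ) (z : ℂ) :
    ‖blaschkeProduct θ a z‖ = ∏ k, ‖z - a k‖ / ‖1 - conj (a k) * z‖ := by
  simp [blaschkeProduct, Complex.norm_exp_ofReal_mul_I, norm_prod]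

theorem norm_blaschkeProduct_of_norm_eq_one (ha : ∀ k, ‖a k‖ < 1) (hz : ‖z‖ = 1) :
    ‖blaschkeProduct θ a z‖ = 1 := by
  rw [norm_blaschkeProduct]
  refine Finset.prod_eq_one fun k _ ↦ ?_
  rw [norm_sub_eq_norm_one_sub_conj_mul hz,
    div_self (norm_ne_zero_iff.2 (one_sub_conj_mul_ne_zero (ha k) hz.le))]

theorem norm_blaschkeProduct_lt_one [Nonempty ι] (ha : ∀ k, ‖a k‖ < 1) (hz : ‖z‖ < 1) :
    ‖blaschkeProduct θ a z‖ < 1 := by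
  classical
  have hfac : ∀ k, ‖z - a k‖ / ‖1 - conj (a k) * z‖ < 1 := fun k ↦ by
    have h := (norm_sub_lt_norm_one_sub_conj_mul_iff (ha k)).2 hz
    exact (div_lt_one ((norm_nonneg _).trans_lt h)).2 h
  obtain ⟨k⟩ := ‹Nonempty ι›
  rw [norm_blaschkeProduct, ← Finset.mul_prod_erase _ _ (Finset.mem_univ k)]
  exact mul_lt_one_of_nonneg_of_lt_one_left (by positivity) (hfac k)
    (Finset.prod_le_one (fun _ _ ↦ by positivity) fun j _ ↦ (hfac j).le)

theorem continuousOn_blaschkeProduct (ha : ∀ k, ‖a k‖ < 1) :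
    ContinuousOn (blaschkeProduct θ a) (closedBall 0 1) := by
  unfold blaschkeProduct
  refine continuousOn_const.mul (continuousOn_finsetProd _ fun k _ ↦ ?_)
  exact (continuousOn_id.sub continuousOn_const).div (by fun_prop)
    fun z hz ↦ one_sub_conj_mul_ne_zero (ha k) (mem_closedBall_zero_iff.1 hz)

theorem differentiableOn_blaschkeProduct (ha : ∀ k, ‖a k‖ < 1) :
    DifferentiableOn ℂ (blaschkeProduct θ a) (ball 0 1) := by
  unfold blaschkeProduct
  refine (differentiableOn_const _).mul (DifferentiableOn.fun_finsetProd fun k _ ↦ ?_)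
  exact (differentiableOn_id.sub (differentiableOn_const _)).div (by fun_prop)
    fun z hz ↦ one_sub_conj_mul_ne_zero (ha k) (mem_ball_zero_iff.1 hz).le

theorem isCompact_setOf_blaschkeProduct_mem (ha : ∀ k, ‖a k‖ < 1) {K : Set ℂ} (hK : IsCompact K)
    (hKD : K ⊆ ball 0 1) : IsCompact {z ∈ ball 0 1 | blaschkeProduct θ a z ∈ K} := by
  have hclosed := (continuousOn_blaschkeProduct (θ := θ) ha).preimage_isClosed_of_isClosed
    isClosed_closedBall hK.isClosed
  convert (isCompact_closedBall 0 1).of_isClosed_subset hclosed inter_subset_left using 1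
  ext z
  simp only [mem_ofPred_eq, mem_inter_iff, mem_preimage, mem_ball_zero_iff, mem_closedBall_zero_iff]
  refine ⟨fun ⟨hz, hzK⟩ ↦ ⟨hz.le, hzK⟩, fun ⟨hz, hzK⟩ ↦ ⟨hz.lt_of_ne fun hz1 ↦ ?_, hzK⟩⟩
  have := mem_ball_zero_iff.1 (hKD hzK)
  rw [norm_blaschkeProduct_of_norm_eq_one ha hz1] at this
  exact this.false

end BlaschkeProduct

namespace Polynomial

variable {ι R : Type*} [Fintype ι] [CommSemiring R]

theorem natDegree_prod_le_card (f : ι → R[X])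
    (hf : ∀ k, (f k).natDegree ≤ 1) : (∏ k, f k).natDegree ≤ Fintype.card ι :=
  (natDegree_prod_le _ _).trans <|
    (Finset.sum_le_card_nsmul _ _ 1 fun k _ ↦ hf k).trans_eq (by simp)

theorem coeff_card_prod (f : ι → R[X])
    (hf : ∀ k, (f k).natDegree ≤ 1) : (∏ k, f k).coeff (Fintype.card ι) = ∏ k, (f k).coeff 1 := by
  simpa using coeff_prod_of_natDegree_le (s := Finset.univ) f 1 fun k _ ↦ hf k

end Polynomial

section FiberPolynomial

variable {ι : Type*} [Fintype ι] {θ : ℝ} {a : ι → ℂ} {w z : ℂ}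

noncomputable def blaschkeNumerator (a : ι → ℂ) : ℂ[X] :=
  ∏ k, (X - C (a k))

noncomputable def blaschkeDenominator (a : ι → ℂ) : ℂ[X] :=
  ∏ k, (1 - C (conj (a k)) * X)

noncomputable def blaschkeFiberPoly (θ : ℝ) (a : ι → ℂ) (w : ℂ) : ℂ[X] :=
  C (Complex.exp (θ * Complex.I)) * blaschkeNumerator a - C w * blaschkeDenominator a

theorem eval_blaschkeNumerator : (blaschkeNumerator a).eval z = ∏ k, (z - a k) := by
  simp [blaschkeNumerator, eval_prod]

theorem eval_blaschkeDenominator :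
    (blaschkeDenominator a).eval z = ∏ k, (1 - conj (a k) * z) := by
  simp [blaschkeDenominator, eval_prod]

theorem eval_blaschkeDenominator_ne_zero (ha : ∀ k, ‖a k‖ < 1) (hz : ‖z‖ ≤ 1) :
    (blaschkeDenominator a).eval z ≠ 0 := by
  rw [eval_blaschkeDenominator]
  exact Finset.prod_ne_zero_iff.2 fun k _ ↦ one_sub_conj_mul_ne_zero (ha k) hz

theorem eval_blaschkeFiberPoly (hz : (blaschkeDenominator a).eval z ≠ 0) :
    (blaschkeFiberPoly θ a w).eval z =
      (blaschkeDenominator a).eval z * (blaschkeProduct θ a z - w) := by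
  simp only [blaschkeFiberPoly, blaschkeProduct, eval_sub, eval_mul, eval_C,
    eval_blaschkeNumerator, Finset.prod_div_distrib, ← eval_blaschkeDenominator]
  field_simp

theorem coeff_blaschkeFiberPoly_card_ne_zero (ha : ∀ k, ‖a k‖ < 1) (hw : ‖w‖ < 1) :
    (blaschkeFiberPoly θ a w).coeff (Fintype.card ι) ≠ 0 := by
  have hnum : (blaschkeNumerator a).coeff (Fintype.card ι) = 1 := by
    rw [blaschkeNumerator, coeff_card_prod _ fun k ↦ by compute_degree]
    simp
  have hden : (blaschkeDenominator a).coeff (Fintype.card ι) = ∏ k, -conj (a k) := by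
    rw [blaschkeDenominator, coeff_card_prod _ fun k ↦ by compute_degree]
    simp [coeff_one]
  rw [blaschkeFiberPoly, coeff_sub, coeff_C_mul, coeff_C_mul, hnum, hden, mul_one, sub_ne_zero]
  refine fun h ↦ (congrArg (‖·‖ : ℂ → ℝ) h).not_gt ?_
  rw [Complex.norm_exp_ofReal_mul_I, norm_mul, norm_prod]
  refine mul_lt_one_of_nonneg_of_lt_one_left (norm_nonneg w) hw
    (Finset.prod_le_one (fun _ _ ↦ norm_nonneg _) fun k _ ↦ ?_)
  rw [norm_neg, Complex.norm_conj]
  exact (ha k).le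

theorem natDegree_blaschkeFiberPoly (ha : ∀ k, ‖a k‖ < 1) (hw : ‖w‖ < 1) :
    (blaschkeFiberPoly θ a w).natDegree = Fintype.card ι := by
  refine le_antisymm ?_ (le_natDegree_of_ne_zero (coeff_blaschkeFiberPoly_card_ne_zero ha hw))
  refine (natDegree_sub_le _ _).trans (max_le ?_ ?_) <;> refine (natDegree_C_mul_le _ _).trans ?_
  · exact natDegree_prod_le_card _ fun k ↦ by compute_degree
  · exact natDegree_prod_le_card _ fun k ↦ by compute_degree

theorem norm_lt_one_of_isRoot_blaschkeFiberPoly (ha : ∀ k, ‖a k‖ < 1) (hw : ‖w‖ < 1)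
    (hz : (blaschkeFiberPoly θ a w).IsRoot z) : ‖z‖ < 1 := by
  by_contra! hz1
  have hle : ‖(blaschkeDenominator a).eval z‖ ≤ ‖(blaschkeNumerator a).eval z‖ := by
    simp only [eval_blaschkeNumerator, eval_blaschkeDenominator, norm_prod]
    exact Finset.prod_le_prod (fun _ _ ↦ norm_nonneg _) fun k _ ↦
      not_lt.1 fun h ↦ hz1.not_gt ((norm_sub_lt_norm_one_sub_conj_mul_iff (ha k)).1 h)
  have heq : ‖(blaschkeNumerator a).eval z‖ = ‖w‖ * ‖(blaschkeDenominator a).eval z‖ := by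
    have h := hz.eq_zero
    simp only [blaschkeFiberPoly, eval_sub, eval_mul, eval_C, sub_eq_zero] at h
    simpa [Complex.norm_exp_ofReal_mul_I] using congrArg (‖·‖ : ℂ → ℝ) h
  have hnum : (blaschkeNumerator a).eval z = 0 := by
    rw [← norm_eq_zero]
    nlinarith [norm_nonneg ((blaschkeNumerator a).eval z), norm_nonneg w]
  obtain ⟨k, -, hk⟩ := Finset.prod_eq_zero_iff.1 (eval_blaschkeNumerator (a := a) ▸ hnum)
  rw [sub_eq_zero] at hk
  exact hz1.not_gt (hk ▸ ha k)

theorem eval_derivative_blaschkeFiberPoly (ha : ∀ k, ‖a k‖ < 1) (hz : ‖z‖ < 1)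
    (hzw : blaschkeProduct θ a z = w) :
    (derivative (blaschkeFiberPoly θ a w)).eval z =
      (blaschkeDenominator a).eval z * deriv (blaschkeProduct θ a) z := by
  have hB : HasDerivAt (blaschkeProduct θ a) (deriv (blaschkeProduct θ a) z) z :=
    ((differentiableOn_blaschkeProduct ha).differentiableAt
      (isOpen_ball.mem_nhds (mem_ball_zero_iff.2 hz))).hasDerivAt
  have hR := ((blaschkeDenominator a).hasDerivAt z).mul (hB.sub_const w)
  have hEq : (fun x ↦ (blaschkeFiberPoly θ a w).eval x) =ᶠ[𝓝 z]
      (fun x ↦ (blaschkeDenominator a).eval x) * fun x ↦ blaschkeProduct θ a x - w := by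
    filter_upwards [isOpen_ball.mem_nhds (mem_ball_zero_iff.2 hz)] with x hx
    exact eval_blaschkeFiberPoly (eval_blaschkeDenominator_ne_zero ha (mem_ball_zero_iff.1 hx).le)
  rw [((blaschkeFiberPoly θ a w).hasDerivAt z).unique (hR.congr_of_eventuallyEq hEq), hzw,
    sub_self, mul_zero, zero_add]

theorem ncard_setOf_blaschkeProduct_eq (ha : ∀ k, ‖a k‖ < 1) (hw : ‖w‖ < 1)
    (hcrit : ∀ z ∈ ball 0 1, blaschkeProduct θ a z = w → deriv (blaschkeProduct θ a) z ≠ 0) :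
    {z ∈ ball 0 1 | blaschkeProduct θ a z = w}.ncard = Fintype.card ι := by
  classical
  have hR0 : blaschkeFiberPoly θ a w ≠ 0 := fun h ↦
    coeff_blaschkeFiberPoly_card_ne_zero ha hw (by rw [h, coeff_zero])
  set R := blaschkeFiberPoly θ a w
  have hden {z : ℂ} (hz : ‖z‖ < 1) := eval_blaschkeDenominator_ne_zero ha hz.le
  have hmem : ∀ z, z ∈ R.roots ↔ z ∈ ball 0 1 ∧ blaschkeProduct θ a z = w := by
    intro z
    rw [mem_roots hR0, mem_ball_zero_iff]
    constructor
    · intro hz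
      have hz1 := norm_lt_one_of_isRoot_blaschkeFiberPoly ha hw hz
      rw [IsRoot.def, eval_blaschkeFiberPoly (hden hz1)] at hz
      exact ⟨hz1, sub_eq_zero.1 ((mul_eq_zero.1 hz).resolve_left (hden hz1))⟩
    · rintro ⟨hz1, hzw⟩
      rw [IsRoot.def, eval_blaschkeFiberPoly (hden hz1), hzw, sub_self, mul_zero]
  have hnodup : R.roots.Nodup := by
    refine Multiset.nodup_iff_count_le_one.2 fun z ↦ ?_
    rw [count_roots]
    by_contra! h
    obtain ⟨hroot, hder⟩ := (one_lt_rootMultiplicity_iff_isRoot hR0).1 h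
    obtain ⟨hz, hzw⟩ := (hmem z).1 ((mem_roots hR0).2 hroot)
    have hz1 := mem_ball_zero_iff.1 hz
    rw [IsRoot.def, eval_derivative_blaschkeFiberPoly ha hz1 hzw] at hder
    exact hcrit z hz hzw ((mul_eq_zero.1 hder).resolve_left (hden hz1))
  have hset : {z ∈ ball 0 1 | blaschkeProduct θ a z = w} = R.roots.toFinset := by
    ext z
    simp [hmem]
  rw [hset, ncard_coe_finset, Multiset.toFinset_card_of_nodup hnodup,
    IsAlgClosed.card_roots_eq_natDegree, natDegree_blaschkeFiberPoly ha hw]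

theorem ncard_fiber_of_eqOn_blaschkeProduct {B : ℂ → ℂ} (ha : ∀ k, ‖a k‖ < 1)
    (hB : EqOn B (blaschkeProduct θ a) (ball 0 1)) (hw : w ∈ ball 0 1 \ critValues B) :
    {z ∈ ball 0 1 | B z ∉ critValues B ∧ B z = w}.ncard = Fintype.card ι := by
  have hset : {z ∈ ball 0 1 | B z ∉ critValues B ∧ B z = w} =
      {z ∈ ball 0 1 | blaschkeProduct θ a z = w} :=
    sep_ext_iff.2 fun z hz ↦ by rw [← hB hz]; exact ⟨And.right, fun h ↦ ⟨h ▸ hw.2, h⟩⟩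
  rw [hset]
  refine ncard_setOf_blaschkeProduct_eq ha (mem_ball_zero_iff.1 hw.1) fun z hz hzw hd ↦ hw.2 ?_
  exact ⟨z, ⟨hz, (hB.deriv isOpen_ball hz).trans hd⟩, (hB hz).trans hzw⟩

end FiberPolynomial

/-- With `X = {z ∈ 𝔻 : B(z) ∉ 𝒮}` and `Y = 𝔻 ∖ 𝒮`, the restriction of a
Blaschke product `B` of order `n ≥ 1`, as a map from `X` onto `Y`, is a (surjective)
covering map, and it is `n`-sheeted: every fiber has exactly `n` points. -/
theorem stmt10 (n : ℕ) (hn : 1 ≤ n) (B : ℂ → ℂ) (hB : IsBlaschke n B) :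
    ∃ h : Set.MapsTo B {z ∈ ball (0 : ℂ) 1 | B z ∉ critValues B}
        (ball (0 : ℂ) 1 \ critValues B),
      IsCoveringMap (h.restrict B {z ∈ ball (0 : ℂ) 1 | B z ∉ critValues B}
          (ball (0 : ℂ) 1 \ critValues B)) ∧
      Function.Surjective (h.restrict B {z ∈ ball (0 : ℂ) 1 | B z ∉ critValues B}
          (ball (0 : ℂ) 1 \ critValues B)) ∧
      ∀ w ∈ ball (0 : ℂ) 1 \ critValues B,
        ({z ∈ ball (0 : ℂ) 1 | B z ∉ critValues B ∧ B z = w}).ncard = n := by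
  obtain ⟨θ, a, ha, hBg⟩ := hB
  replace ha : ∀ k, ‖a k‖ < 1 := fun k ↦ mem_ball_zero_iff.1 (ha k)
  replace hBg : EqOn B (blaschkeProduct θ a) (ball 0 1) := hBg
  have : Nonempty (Fin n) := ⟨⟨0, hn⟩⟩
  have hmaps : MapsTo B (ball 0 1) (ball 0 1) := fun z hz ↦ by
    rw [hBg hz, mem_ball_zero_iff]
    exact norm_blaschkeProduct_lt_one ha (mem_ball_zero_iff.1 hz)
  have hK (K : Set ℂ) (hKD : K ⊆ ball 0 1) (hKc : IsCompact K) :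
      IsCompact {z ∈ ball 0 1 | B z ∈ K} := by
    convert isCompact_setOf_blaschkeProduct_mem (θ := θ) ha hKc hKD using 1
    exact sep_ext_iff.2 fun z hz ↦ by rw [hBg hz]
  have hfiber (w) (hw : w ∈ ball (0 : ℂ) 1 \ critValues B) :
      {z ∈ ball (0 : ℂ) 1 | B z ∉ critValues B ∧ B z = w}.ncard = n :=
    (ncard_fiber_of_eqOn_blaschkeProduct ha hBg hw).trans (Fintype.card_fin n)
  have hX : MapsTo B {z ∈ ball (0 : ℂ) 1 | B z ∉ critValues B} (ball 0 1 \ critValues B) :=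
    fun z hz ↦ ⟨hmaps hz.1, hz.2⟩
  refine ⟨hX, isCoveringMap_restrict_compl_critValuesOn isOpen_ball
    ((differentiableOn_blaschkeProduct ha).congr hBg) hmaps hK hX, fun w ↦ ?_, hfiber⟩
  obtain ⟨z, hz, hzS, hzw⟩ := nonempty_of_ncard_ne_zero (by rw [hfiber w w.2]; omega)
  exact ⟨⟨z, hz, hzS⟩, Subtype.ext hzw⟩
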